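/- arXiv:2107.12144 — 12 statements merged into one kernel-verified Lean document; each statement's English description precedes it below -/
import Mathlib

section
/- Let C be a monoidal category in which every morphism is a split monomorphism, and fix objects A and B of C. On pairs (G, f) consisting of an object G of C and a morphism f : A ⟶ B ⊗ G, define (G, f) ∼ (G', f') to hold if and only if there exists a morphism h : G ⟶ G' such that f ≫ (𝟙_B ⊗ h) = f'. Then ∼ is an equivalence relation: it is reflexive, transitive, and symmetric. -/
open CategoryTheory MonoidalCategory

/-- The garbage-mediator relation underlying the `L`-construction: on pairs `(G, f)` with
`f : A ⟶ B ⊗ G`, relate `(G, f)` to `(G', f')` when some mediator `h : G ⟶ G'` satisfies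
`f ≫ (𝟙 B ⊗ h) = f'`. When every morphism of `C` is a split monomorphism, this is an
equivalence relation. -/
theorem L_relation_equivalence {C : Type*} [Category C] [MonoidalCategory C]
    (split : ∀ {X Y : C} (f : X ⟶ Y), IsSplitMono f) (A B : C) :
    Equivalence (fun (p q : Σ G : C, A ⟶ B ⊗ G) =>
      ∃ h : p.1 ⟶ q.1, p.2 ≫ (𝟙 B ⊗ₘ h) = q.2) := by
  constructor
  · intro p
    exact ⟨𝟙 _, by simp⟩
  · rintro p q ⟨h, hf⟩
    have := split h
    refine ⟨retraction h, ?_⟩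
    rw [← hf, Category.assoc, tensorHom_comp_tensorHom, IsSplitMono.id, Category.comp_id,
      id_tensorHom_id, Category.comp_id]
  · rintro p q r ⟨h, hf⟩ ⟨k, hk⟩
    refine ⟨h ≫ k, ?_⟩
    rw [← hk, ← hf, Category.assoc, tensorHom_comp_tensorHom, Category.comp_id]
end

section
/- Let C be a monoidal category in which every morphism is a split epimorphism, and fix objects A and B of C. On pairs (H, f) consisting of an object H of C and a morphism f : A ⊗ H ⟶ B, define (H, f) ∼ (H', f') to hold if and only if there exists a morphism h : H' ⟶ H such that (𝟙_A ⊗ h) ≫ f = f'. Then ∼ is an equivalence relation: it is reflexive, transitive, and symmetric. -/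
open CategoryTheory MonoidalCategory

/-- The heap-mediator relation underlying the `R`-construction: on pairs `(H, f)` with
`f : A ⊗ H ⟶ B`, relate `(H, f)` to `(H', f')` when some mediator `h : H' ⟶ H` satisfies
`(𝟙 A ⊗ h) ≫ f = f'`. When every morphism of `C` is a split epimorphism, this is an
equivalence relation. -/
theorem R_relation_equivalence {C : Type*} [Category C] [MonoidalCategory C]
    (split : ∀ {X Y : C} (f : X ⟶ Y), IsSplitEpi f) (A B : C) :
    Equivalence (fun (p q : Σ H : C, A ⊗ H ⟶ B) =>
      ∃ h : q.1 ⟶ p.1, (𝟙 A ⊗ₘ h) ≫ p.2 = q.2) := by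
  constructor
  · intro p
    exact ⟨𝟙 _, by simp⟩
  · rintro p q ⟨h, hh⟩
    obtain ⟨s, hs⟩ := split h
    exact ⟨s, by rw [← hh, ← Category.assoc, MonoidalCategory.tensorHom_comp_tensorHom, hs]; simp⟩
  · rintro p q r ⟨h1, hh1⟩ ⟨h2, hh2⟩
    exact ⟨h2 ≫ h1, by rw [← hh2, ← hh1, ← Category.assoc, MonoidalCategory.tensorHom_comp_tensorHom]; simp⟩
end

section
/- Let C be a monoidal category. For morphisms f : A ⟶ B ⊗ G and g : B ⟶ C ⊗ K define their garbage-composite comp(f, g) : A ⟶ C ⊗ (K ⊗ G) as f ≫ (g ⊗ 𝟙_G) ≫ α_{C,K,G}, where α_{C,K,G} : (C ⊗ K) ⊗ G ≅ C ⊗ (K ⊗ G) is the associator. Then for all mediators h : G ⟶ G' and k : K ⟶ K' one has comp(f ≫ (𝟙_B ⊗ h), g ≫ (𝟙_C ⊗ k)) = comp(f, g) ≫ (𝟙_C ⊗ (k ⊗ h)). In particular, composition in the category L(C) of morphisms-with-garbage is well defined on mediator-equivalence classes. -/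
open CategoryTheory MonoidalCategory

/-- Garbage-composite of morphisms-with-garbage: for `f : A ⟶ B ⊗ G` and `g : B ⟶ X ⊗ K`,
`gcomp f g : A ⟶ X ⊗ (K ⊗ G)` is `f ≫ (g ⊗ 𝟙 G) ≫ α`. -/
def gcomp {C : Type*} [Category C] [MonoidalCategory C] {A B X G K : C}
    (f : A ⟶ B ⊗ G) (g : B ⟶ X ⊗ K) : A ⟶ X ⊗ (K ⊗ G) :=
  f ≫ (g ⊗ₘ 𝟙 G) ≫ (α_ X K G).hom

/-- Composition in `L(C)` is well defined on mediator-equivalence classes: postcomposing the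
garbage of `f` by `h` and that of `g` by `k` changes the garbage-composite exactly by the
mediator `k ⊗ h`. -/
theorem gcomp_well_defined {C : Type*} [Category C] [MonoidalCategory C]
    {A B X G G' K K' : C} (f : A ⟶ B ⊗ G) (g : B ⟶ X ⊗ K)
    (h : G ⟶ G') (k : K ⟶ K') :
    gcomp (f ≫ (𝟙 B ⊗ₘ h)) (g ≫ (𝟙 X ⊗ₘ k)) = gcomp f g ≫ (𝟙 X ⊗ₘ (k ⊗ₘ h)) := by
  simp [gcomp, tensorHom_comp_tensorHom, associator_naturality, whisker_exchange_assoc, MonoidalCategory.tensorHom_def, MonoidalCategory.whiskerLeft_comp]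
  rw [← MonoidalCategory.whiskerLeft_comp, ← MonoidalCategory.whiskerLeft_comp, whisker_exchange]
end

section
/- Let C be a monoidal category. For morphisms f : A ⊗ H ⟶ B and g : B ⊗ K ⟶ C define their heap-composite comp(f, g) : A ⊗ (H ⊗ K) ⟶ C as α_{A,H,K}⁻¹ ≫ (f ⊗ 𝟙_K) ≫ g, where α_{A,H,K} : (A ⊗ H) ⊗ K ≅ A ⊗ (H ⊗ K) is the associator. Then for all mediators h : H' ⟶ H and k : K' ⟶ K one has (𝟙_A ⊗ (h ⊗ k)) ≫ comp(f, g) = comp((𝟙_A ⊗ h) ≫ f, (𝟙_B ⊗ k) ≫ g). In particular, composition in the category R(C) of morphisms-with-heap is well defined on mediator-equivalence classes. -/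
open CategoryTheory MonoidalCategory

/-- Heap-composite of morphisms-with-heap: for `f : A ⊗ H ⟶ B` and `g : B ⊗ K ⟶ X`,
`hcomp f g : A ⊗ (H ⊗ K) ⟶ X` is `α⁻¹ ≫ (f ⊗ 𝟙 K) ≫ g`. -/
def hcomp {C : Type*} [Category C] [MonoidalCategory C] {A B X H K : C}
    (f : A ⊗ H ⟶ B) (g : B ⊗ K ⟶ X) : A ⊗ (H ⊗ K) ⟶ X :=
  (α_ A H K).inv ≫ (f ⊗ₘ 𝟙 K) ≫ g

/-- Composition in `R(C)` is well defined on mediator-equivalence classes: precomposing the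
heap of `f` by `h` and that of `g` by `k` changes the heap-composite exactly by the mediator
`h ⊗ k`. -/
theorem hcomp_well_defined {C : Type*} [Category C] [MonoidalCategory C]
    {A B X H H' K K' : C} (f : A ⊗ H ⟶ B) (g : B ⊗ K ⟶ X)
    (h : H' ⟶ H) (k : K' ⟶ K) :
    (𝟙 A ⊗ₘ (h ⊗ₘ k)) ≫ hcomp f g = hcomp ((𝟙 A ⊗ₘ h) ≫ f) ((𝟙 B ⊗ₘ k) ≫ g) := by
  simp only [hcomp, associator_inv_naturality_assoc, tensorHom_comp_tensorHom_assoc,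
    Category.id_comp, Category.comp_id]
end

section
/- Let C be a monoidal groupoid with tensor unit I. For any two morphisms f : A ⟶ I ⊗ G and g : A ⟶ I ⊗ G' of C, there exists a morphism h : G ⟶ G' such that f ≫ (𝟙_I ⊗ h) = g. (This expresses that the tensor unit I is a terminal object in the category L(C) of morphisms-with-garbage built from C.) -/
open CategoryTheory MonoidalCategory

/-- In the `L`-construction on a monoidal groupoid, the tensor unit is terminal: any two
morphisms-with-garbage `f : A ⟶ 𝟙_C ⊗ G` and `g : A ⟶ 𝟙_C ⊗ G'` are identified by some
mediator `h : G ⟶ G'`. -/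
theorem L_unit_terminal {C : Type*} [Groupoid C] [MonoidalCategory C]
    {A G G' : C} (f : A ⟶ 𝟙_ C ⊗ G) (g : A ⟶ 𝟙_ C ⊗ G') :
    ∃ h : G ⟶ G', f ≫ (𝟙 (𝟙_ C) ⊗ₘ h) = g := by
  refine ⟨(λ_ G).inv ≫ Groupoid.inv f ≫ g ≫ (λ_ G').hom, ?_⟩
  have : 𝟙 (𝟙_ C) ⊗ₘ ((λ_ G).inv ≫ Groupoid.inv f ≫ g ≫ (λ_ G').hom)
      = (λ_ G).hom ≫ ((λ_ G).inv ≫ Groupoid.inv f ≫ g ≫ (λ_ G').hom) ≫ (λ_ G').inv := by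
    rw [← leftUnitor_naturality]; simp
  rw [this]
  simp
end

section
/- Let C be a monoidal groupoid with tensor unit O. For any two morphisms g : O ⊗ H ⟶ A and g' : O ⊗ H' ⟶ A of C, there exists a morphism h : H ⟶ H' such that (𝟙_O ⊗ h) ≫ g' = g. (This expresses that the tensor unit O is an initial object in the category R(C) of morphisms-with-heap built from C.) -/
open CategoryTheory MonoidalCategory

/-- In the `R`-construction on a monoidal groupoid, the tensor unit is initial: any two
morphisms-with-heap `g : 𝟙_C ⊗ H ⟶ A` and `g' : 𝟙_C ⊗ H' ⟶ A` are identified by some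
mediator `h : H ⟶ H'`. -/
theorem R_unit_initial {C : Type*} [Groupoid C] [MonoidalCategory C]
    {A H H' : C} (g : 𝟙_ C ⊗ H ⟶ A) (g' : 𝟙_ C ⊗ H' ⟶ A) :
    ∃ h : H ⟶ H', (𝟙 (𝟙_ C) ⊗ₘ h) ≫ g' = g := by
  refine ⟨(λ_ H).inv ≫ g ≫ Groupoid.inv g' ≫ (λ_ H').hom, ?_⟩
  have : (𝟙 (𝟙_ C) ⊗ₘ ((λ_ H).inv ≫ g ≫ Groupoid.inv g' ≫ (λ_ H').hom))
      = (λ_ H).hom ≫ ((λ_ H).inv ≫ g ≫ Groupoid.inv g' ≫ (λ_ H').hom) ≫ (λ_ H').inv := by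
    rw [← leftUnitor_naturality]; simp
  rw [this]; simp
end

section
/- (Fundamental theorem of reversible computing, Toffoli.) Let A and B be finite types and let f : A → B be any function. Then there exist finite types H and G and a bijection e : A ⊕ H ≃ B × G such that for every a : A, the first component of e (Sum.inl a) equals f a. In other words, every function between finite sets factors as an injection into a larger finite set, followed by a bijection, followed by a projection. -/
/-- Toffoli's fundamental theorem of reversible computing: every function `f : A → B` between
finite types factors as the injection `Sum.inl : A → A ⊕ H`, followed by a bijection
`e : A ⊕ H ≃ B × G`, followed by the projection `Prod.fst : B × G → B`. -/
theorem toffoli_fundamental {A B : Type} [Finite A] [Finite B] (f : A → B) :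
    ∃ (H G : Type) (_ : Finite H) (_ : Finite G) (e : A ⊕ H ≃ B × G),
      ∀ a : A, (e (Sum.inl a)).1 = f a := by
  classical
  set g : A → B × A := fun a => (f a, a) with hg
  have hinj : Function.Injective g := fun a b h => congrArg Prod.snd h
  refine ⟨↥(Set.range g)ᶜ, A, inferInstance, inferInstance,
    (Equiv.sumCongr (Equiv.ofInjective g hinj) (Equiv.refl _)).trans
      (Equiv.Set.sumCompl (Set.range g)), fun a => ?_⟩
  simp [Equiv.Set.sumCompl, g]
  rfl
end

section
/- Let A and B be inner product spaces over ℂ with A finite-dimensional, and let f : A →ₗᵢ[ℂ] B be a linear isometry. Let K := (range f)ᗮ be the orthogonal complement in B of the range of f, regarded as an inner product space. Then there exists a linear isometry equivalence e : (A × K, with the ℓ²-product inner product) ≃ₗᵢ[ℂ] B such that e (a, k) = f a + k for all a ∈ A and k ∈ K; in particular e (a, 0) = f a for all a ∈ A. Hence every isometry out of a finite-dimensional complex inner product space is a unitary precomposed with the canonical inclusion a ↦ (a, 0). -/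
/-- Stinespring-style factorisation of isometries (Huot–Staton, `R(Unitary) ≃ Isometry`):
every linear isometry `f : A →ₗᵢ[ℂ] B` out of a finite-dimensional complex inner product
space is a unitary `e : A × (range f)ᗮ ≃ₗᵢ[ℂ] B` (with the ℓ²-product inner product)
precomposed with the canonical inclusion `a ↦ (a, 0)`; concretely `e (a, k) = f a + k`. -/
theorem isometry_factors_through_unitary {A B : Type*}
    [NormedAddCommGroup A] [InnerProductSpace ℂ A]
    [NormedAddCommGroup B] [InnerProductSpace ℂ B]
    [FiniteDimensional ℂ A] (f : A →ₗᵢ[ℂ] B) :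
    ∃ e : WithLp 2 (A × (LinearMap.range f.toLinearMap)ᗮ) ≃ₗᵢ[ℂ] B,
      ∀ (a : A) (k : (LinearMap.range f.toLinearMap)ᗮ),
        e ((WithLp.equiv 2 (A × (LinearMap.range f.toLinearMap)ᗮ)).symm (a, k))
          = f a + (k : B) := by
  set K := (LinearMap.range f.toLinearMap)ᗮ
  -- the underlying linear map
  let L : WithLp 2 (A × K) →ₗ[ℂ] B :=
    (f.toLinearMap.comp (LinearMap.fst ℂ A K) + K.subtype.comp (LinearMap.snd ℂ A K)).comp
      (WithLp.linearEquiv 2 ℂ (A × K)).toLinearMap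
  have hL : ∀ x : WithLp 2 (A × K), L x = f x.fst + (x.snd : B) := fun x => rfl
  have hnorm : ∀ x : WithLp 2 (A × K), ‖L x‖ = ‖x‖ := by
    intro x
    have horth : inner ℂ (f x.fst) ((x.snd : B)) = (0 : ℂ) :=
      (Submodule.mem_orthogonal _ _).1 x.snd.2 (f x.fst) ⟨x.fst, rfl⟩
    have h1 : ‖L x‖ ^ 2 = ‖x‖ ^ 2 := by
      rw [hL, pow_two, norm_add_sq_eq_norm_sq_add_norm_sq_of_inner_eq_zero _ _ horth,
        ← pow_two, ← pow_two,
        WithLp.prod_norm_sq_eq_of_L2, f.norm_map]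
      rfl
    calc ‖L x‖ = Real.sqrt (‖L x‖ ^ 2) := (Real.sqrt_sq (norm_nonneg _)).symm
      _ = Real.sqrt (‖x‖ ^ 2) := by rw [h1]
      _ = ‖x‖ := Real.sqrt_sq (norm_nonneg _)
  let g : WithLp 2 (A × K) →ₗᵢ[ℂ] B := ⟨L, hnorm⟩
  have hsurj : Function.Surjective g := by
    intro b
    have : CompleteSpace (LinearMap.range f.toLinearMap) := by
      haveI : FiniteDimensional ℂ (LinearMap.range f.toLinearMap) :=
        Module.Finite.range f.toLinearMap
      exact FiniteDimensional.complete ℂ _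
    obtain ⟨y, hy, z, hz, rfl⟩ :=
      (LinearMap.range f.toLinearMap).exists_add_mem_mem_orthogonal b
    obtain ⟨a, rfl⟩ := hy
    exact ⟨(WithLp.equiv 2 (A × K)).symm (a, ⟨z, hz⟩), rfl⟩
  exact ⟨LinearIsometryEquiv.ofSurjective g hsurj, fun a k => rfl⟩
end

section
/- Let A, B, H, H' be inner product spaces over ℂ, and let e : (A × H, ℓ²-product) ≃ₗᵢ[ℂ] B and e' : (A × H', ℓ²-product) ≃ₗᵢ[ℂ] B be linear isometry equivalences such that e (a, 0) = e' (a, 0) for all a ∈ A. Then there exists a linear isometry equivalence W : H ≃ₗᵢ[ℂ] H' such that e' (a, W h) = e (a, h) for all a ∈ A and h ∈ H. That is, two unitary dilations of the same isometry differ by a unique unitary mediator on the heap. -/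
/-- Uniqueness of unitary dilations up to a unitary mediator on the heap: if two unitaries
`e : A × H ≃ₗᵢ[ℂ] B` and `e' : A × H' ≃ₗᵢ[ℂ] B` (ℓ²-product inner products) restrict to the
same isometry on `A` (i.e. `e (a, 0) = e' (a, 0)` for all `a`), then there is a unitary
`W : H ≃ₗᵢ[ℂ] H'` with `e' (a, W h) = e (a, h)` for all `a` and `h`. -/
theorem dilation_unique_up_to_unitary {A B H H' : Type*}
    [NormedAddCommGroup A] [InnerProductSpace ℂ A]
    [NormedAddCommGroup B] [InnerProductSpace ℂ B]
    [NormedAddCommGroup H] [InnerProductSpace ℂ H]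
    [NormedAddCommGroup H'] [InnerProductSpace ℂ H']
    (e : WithLp 2 (A × H) ≃ₗᵢ[ℂ] B) (e' : WithLp 2 (A × H') ≃ₗᵢ[ℂ] B)
    (he : ∀ a : A, e ((WithLp.equiv 2 (A × H)).symm (a, 0))
        = e' ((WithLp.equiv 2 (A × H')).symm (a, 0))) :
    ∃ W : H ≃ₗᵢ[ℂ] H', ∀ (a : A) (h : H),
      e' ((WithLp.equiv 2 (A × H')).symm (a, W h))
        = e ((WithLp.equiv 2 (A × H)).symm (a, h)) := by
  set T : WithLp 2 (A × H) ≃ₗᵢ[ℂ] WithLp 2 (A × H') := e.trans e'.symm with hTdef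
  have hTa : ∀ a : A, T ((WithLp.equiv 2 (A × H)).symm (a, 0))
      = (WithLp.equiv 2 (A × H')).symm (a, 0) := by
    intro a
    have hea := he a
    simp only [WithLp.equiv_symm_apply] at hea
    simp [hTdef, LinearIsometryEquiv.trans_apply, hea]
  have hTa' : ∀ a : A, T.symm ((WithLp.equiv 2 (A × H')).symm (a, 0))
      = (WithLp.equiv 2 (A × H)).symm (a, 0) := by
    intro a
    rw [← hTa a, T.symm_apply_apply]
  have hfst : ∀ h : H, (T ((WithLp.equiv 2 (A × H)).symm (0, h))).fst = 0 := by
    intro h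
    have key : ∀ a : A, (inner ℂ a (T ((WithLp.equiv 2 (A × H)).symm (0, h))).fst : ℂ) = 0 := by
      intro a
      have h1 := T.inner_map_map ((WithLp.equiv 2 (A × H)).symm (a, 0))
        ((WithLp.equiv 2 (A × H)).symm (0, h))
      rw [hTa a] at h1
      simpa [WithLp.prod_inner_apply] using h1
    exact inner_self_eq_zero.mp (key _)
  have hfst' : ∀ h : H', (T.symm ((WithLp.equiv 2 (A × H')).symm (0, h))).fst = 0 := by
    intro h
    have key : ∀ a : A, (inner ℂ a (T.symm ((WithLp.equiv 2 (A × H')).symm (0, h))).fst : ℂ) = 0 := by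
      intro a
      have h1 := T.symm.inner_map_map ((WithLp.equiv 2 (A × H')).symm (a, 0))
        ((WithLp.equiv 2 (A × H')).symm (0, h))
      rw [hTa' a] at h1
      simpa [WithLp.prod_inner_apply] using h1
    exact inner_self_eq_zero.mp (key _)
  -- recover full element from snd
  have hrec : ∀ h : H, (WithLp.equiv 2 (A × H')).symm
      (0, (T ((WithLp.equiv 2 (A × H)).symm (0, h))).snd)
      = T ((WithLp.equiv 2 (A × H)).symm (0, h)) := by
    intro h
    apply (WithLp.equiv 2 (A × H')).injective
    apply Prod.ext
    · have hf := hfst h; simp only [WithLp.equiv_symm_apply] at hf; simp [hf]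
    · simp
  have hrec' : ∀ h : H', (WithLp.equiv 2 (A × H)).symm
      (0, (T.symm ((WithLp.equiv 2 (A × H')).symm (0, h))).snd)
      = T.symm ((WithLp.equiv 2 (A × H')).symm (0, h)) := by
    intro h
    apply (WithLp.equiv 2 (A × H)).injective
    apply Prod.ext
    · have hf := hfst' h; simp only [WithLp.equiv_symm_apply] at hf; simp [hf]
    · simp
  refine ⟨{ toFun := fun h => (T ((WithLp.equiv 2 (A × H)).symm (0, h))).snd
            invFun := fun h => (T.symm ((WithLp.equiv 2 (A × H')).symm (0, h))).snd
            map_add' := ?_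
            map_smul' := ?_
            left_inv := ?_
            right_inv := ?_
            norm_map' := ?_ }, ?_⟩
  · intro h h'
    show (T ((WithLp.equiv 2 (A × H)).symm ((0 : A), h + h'))).snd = _
    have : ((0, h + h') : A × H) = (0, h) + (0, h') := by simp [Prod.ext_iff]
    rw [this, WithLp.equiv_symm_apply, WithLp.toLp_add, T.map_add]
    rfl
  · intro c h
    show (T ((WithLp.equiv 2 (A × H)).symm ((0 : A), c • h))).snd
      = c • (T ((WithLp.equiv 2 (A × H)).symm ((0 : A), h))).snd
    have : ((0, c • h) : A × H) = c • (0, h) := by simp [Prod.ext_iff]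
    rw [this, WithLp.equiv_symm_apply, WithLp.toLp_smul, T.map_smul]
    rfl
  · intro h
    simp only [hrec h, T.symm_apply_apply]; rfl
  · intro h
    simp only [hrec' h, T.apply_symm_apply]; rfl
  · intro h
    show ‖(T ((WithLp.equiv 2 (A × H)).symm ((0 : A), h))).snd‖ = ‖h‖
    have h1 : ‖(WithLp.equiv 2 (A × H')).symm
        (0, (T ((WithLp.equiv 2 (A × H)).symm (0, h))).snd)‖
        = ‖T ((WithLp.equiv 2 (A × H)).symm (0, h))‖ := by rw [hrec h]
    rw [WithLp.equiv_symm_apply, WithLp.norm_toLp_snd] at h1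
    rw [h1, T.norm_map, WithLp.equiv_symm_apply, WithLp.norm_toLp_snd]
  · intro a h
    have hsplit : ((WithLp.equiv 2 (A × H)).symm (a, h))
        = (WithLp.equiv 2 (A × H)).symm (a, 0) + (WithLp.equiv 2 (A × H)).symm (0, h) := by
      rw [WithLp.equiv_symm_apply, ← WithLp.toLp_add]
      simp only [Prod.mk_add_mk, add_zero, zero_add]
    have hsplit' : ∀ x : H', ((WithLp.equiv 2 (A × H')).symm (a, x))
        = (WithLp.equiv 2 (A × H')).symm (a, 0) + (WithLp.equiv 2 (A × H')).symm (0, x) := by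
      intro x
      rw [WithLp.equiv_symm_apply, ← WithLp.toLp_add]
      simp only [Prod.mk_add_mk, add_zero, zero_add]
    have : T ((WithLp.equiv 2 (A × H)).symm (a, h))
        = (WithLp.equiv 2 (A × H')).symm
            (a, (T ((WithLp.equiv 2 (A × H)).symm (0, h))).snd) := by
      rw [hsplit, T.map_add, hTa a, hsplit' ((T ((WithLp.equiv 2 (A × H)).symm (0, h))).snd), hrec h]
    have h2 : e' (T ((WithLp.equiv 2 (A × H)).symm (a, h)))
        = e ((WithLp.equiv 2 (A × H)).symm (a, h)) := by
      simp [hTdef, LinearIsometryEquiv.trans_apply]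
    rw [this] at h2
    simpa using h2
end

section
/- Let H := (1/√2 : ℂ) • !![1, 1; 1, -1] be the Hadamard matrix, an element of the unitary group of 2 × 2 complex matrices, and let D be the set of all diagonal elements of that unitary group (i.e., unitary U with U i j = 0 whenever i ≠ j). Then the subgroup of Matrix.unitaryGroup (Fin 2) ℂ generated by {H} ∪ D is the whole group: every 2 × 2 unitary complex matrix is a finite product of Hadamard matrices and diagonal unitary (phase) matrices. -/
open Matrix Complex

private lemma diag_unitary (p q : ℂ) (hp : ‖p‖ = 1) (hq : ‖q‖ = 1) :
    !![p,0;0,q] ∈ Matrix.unitaryGroup (Fin 2) ℂ := by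
  rw [Matrix.mem_unitaryGroup_iff]
  have : star !![p,0;0,q] = !![(starRingEnd ℂ) p, 0; 0, (starRingEnd ℂ) q] := by
    ext i j; fin_cases i <;> fin_cases j <;> simp [Matrix.star_apply]
  rw [this, Matrix.mul_fin_two]
  have hp' : p * (starRingEnd ℂ) p = 1 := by
    rw [Complex.mul_conj]; norm_cast; simp [← Complex.sq_norm, hp]
  have hq' : q * (starRingEnd ℂ) q = 1 := by
    rw [Complex.mul_conj]; norm_cast; simp [← Complex.sq_norm, hq]
  simp [hp', hq', Matrix.one_fin_two]

set_option maxHeartbeats 1000000 in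
/-- Single-qubit exact universality of Hadamard plus phases: the subgroup of the `2 × 2`
complex unitary group generated by the Hadamard matrix `(1/√2) • !![1, 1; 1, -1]` together
with all diagonal (phase) unitaries is the whole unitary group. -/
theorem hadamard_phases_generate (Hd : Matrix.unitaryGroup (Fin 2) ℂ)
    (hHd : (Hd : Matrix (Fin 2) (Fin 2) ℂ) = (1 / (Real.sqrt 2 : ℂ)) • !![1, 1; 1, -1]) :
    Subgroup.closure
      ({Hd} ∪ {U : Matrix.unitaryGroup (Fin 2) ℂ |
        ∀ i j : Fin 2, i ≠ j → (U : Matrix (Fin 2) (Fin 2) ℂ) i j = 0}) = ⊤ := by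
  set S : Set (Matrix.unitaryGroup (Fin 2) ℂ) :=
    {Hd} ∪ {U : Matrix.unitaryGroup (Fin 2) ℂ |
        ∀ i j : Fin 2, i ≠ j → (U : Matrix (Fin 2) (Fin 2) ℂ) i j = 0} with hS
  rw [eq_top_iff]
  rintro U -
  have hHmem : Hd ∈ Subgroup.closure S := Subgroup.subset_closure (Or.inl rfl)
  have h2 : ((Real.sqrt 2 : ℂ)) * ((Real.sqrt 2 : ℂ)) = 2 := by
    norm_cast; rw [Real.mul_self_sqrt]; norm_num
  have h0 : (Real.sqrt 2 : ℂ) ≠ 0 := by norm_cast; positivity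
  have hsq : ((Real.sqrt 2:ℂ))^2 = 2 := by rw [sq, h2]
  -- entries
  set a : ℂ := (U : Matrix (Fin 2) (Fin 2) ℂ) 0 0 with ha
  set b : ℂ := (U : Matrix (Fin 2) (Fin 2) ℂ) 0 1 with hb
  set c : ℂ := (U : Matrix (Fin 2) (Fin 2) ℂ) 1 0 with hc
  set d : ℂ := (U : Matrix (Fin 2) (Fin 2) ℂ) 1 1 with hd
  have hUU : (U : Matrix (Fin 2) (Fin 2) ℂ) * star (U : Matrix (Fin 2) (Fin 2) ℂ) = 1 :=
    Matrix.mem_unitaryGroup_iff.mp U.2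
  have hUU' : star (U : Matrix (Fin 2) (Fin 2) ℂ) * (U : Matrix (Fin 2) (Fin 2) ℂ) = 1 :=
    Matrix.mem_unitaryGroup_iff'.mp U.2
  have row0 : a * (starRingEnd ℂ) a + b * (starRingEnd ℂ) b = 1 := by
    have := congrFun (congrFun hUU 0) 0
    simpa [Matrix.mul_apply, Fin.sum_univ_two, Matrix.star_apply, ha, hb] using this
  have col0 : (starRingEnd ℂ) a * a + (starRingEnd ℂ) c * c = 1 := by
    have := congrFun (congrFun hUU' 0) 0
    simpa [Matrix.mul_apply, Fin.sum_univ_two, Matrix.star_apply, ha, hc] using this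
  have orth : (starRingEnd ℂ) a * b + (starRingEnd ℂ) c * d = 0 := by
    have := congrFun (congrFun hUU' 0) 1
    simpa [Matrix.mul_apply, Fin.sum_univ_two, Matrix.star_apply] using this
  -- normSq versions
  have nrow0 : Complex.normSq a + Complex.normSq b = 1 := by
    have : ((Complex.normSq a + Complex.normSq b : ℝ) : ℂ) = 1 := by
      push_cast [← Complex.mul_conj]; linear_combination row0
    exact_mod_cast this
  have ncol0 : Complex.normSq a + Complex.normSq c = 1 := by
    have : ((Complex.normSq a + Complex.normSq c : ℝ) : ℂ) = 1 := by
      push_cast [← Complex.mul_conj]; linear_combination col0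
    exact_mod_cast this
  have hbc : ‖b‖ = ‖c‖ := by
    have : Complex.normSq b = Complex.normSq c := by linarith
    rw [Complex.norm_def, Complex.norm_def, this]
  by_cases hc0 : c = 0
  · -- diagonal case
    have hb0 : b = 0 := by
      have : ‖b‖ = 0 := by rw [hbc, hc0, norm_zero]
      exact norm_eq_zero.mp this
    refine Subgroup.subset_closure (Or.inr ?_)
    intro i j hij
    fin_cases i <;> fin_cases j <;> simp_all
  · by_cases ha0 : a = 0
    · -- antidiagonal case
      have hna : Complex.normSq a = 0 := by rw [ha0, map_zero]
      have habs_b : ‖b‖ = 1 := by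
        have : Complex.normSq b = 1 := by linarith
        rw [Complex.norm_def, this, Real.sqrt_one]
      have habs_c : ‖c‖ = 1 := by rw [← hbc]; exact habs_b
      have hd0 : d = 0 := by
        have h1 : (starRingEnd ℂ) c * d = 0 := by
          have : (starRingEnd ℂ) a = 0 := by rw [ha0, map_zero]
          rw [this, zero_mul, zero_add] at orth; exact orth
        rcases mul_eq_zero.mp h1 with h | h
        · exact absurd (by simpa using h) hc0
        · exact h
      set D1 : Matrix.unitaryGroup (Fin 2) ℂ :=
        ⟨!![b,0;0,c], diag_unitary b c habs_b habs_c⟩ with hD1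
      set Dz : Matrix.unitaryGroup (Fin 2) ℂ :=
        ⟨!![1,0;0,-1], diag_unitary 1 (-1) (by simp) (by simp)⟩ with hDz
      have hD1mem : D1 ∈ Subgroup.closure S := by
        refine Subgroup.subset_closure (Or.inr ?_)
        intro i j hij; fin_cases i <;> fin_cases j <;> simp_all [hD1]
      have hDzmem : Dz ∈ Subgroup.closure S := by
        refine Subgroup.subset_closure (Or.inr ?_)
        intro i j hij; fin_cases i <;> fin_cases j <;> simp_all [hDz]
      have key : U = D1 * Hd * Dz * Hd := by
        apply Subtype.ext
        have hcoe : ((D1 * Hd * Dz * Hd : Matrix.unitaryGroup (Fin 2) ℂ) :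
            Matrix (Fin 2) (Fin 2) ℂ) = !![0,b;c,0] := by
          push_cast [hHd, hD1, hDz]
          ext i j
          fin_cases i <;> fin_cases j <;>
            simp [Matrix.mul_apply, Fin.sum_univ_two] <;> field_simp <;> ring_nf <;>
            simp [h2, hsq]
        rw [hcoe]
        ext i j
        fin_cases i <;> fin_cases j <;> simp [← ha, ← hb, ← hc, ← hd, ha0, hd0]
      rw [key]
      exact mul_mem (mul_mem (mul_mem hD1mem hHmem) hDzmem) hHmem
    · -- generic case
      set c0 : ℝ := ‖a‖ with hc0def
      set s0 : ℝ := ‖c‖ with hs0def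
      have hc0pos : 0 < c0 := norm_pos_iff.mpr ha0
      have hs0pos : 0 < s0 := norm_pos_iff.mpr hc0
      have hc0ne : (c0:ℂ) ≠ 0 := by exact_mod_cast hc0pos.ne'
      have hs0ne : (s0:ℂ) ≠ 0 := by exact_mod_cast hs0pos.ne'
      have hsIne : (s0:ℂ) * I ≠ 0 := mul_ne_zero hs0ne I_ne_zero
      have hcs1 : c0^2 + s0^2 = 1 := by
        rw [hc0def, hs0def, Complex.sq_norm, Complex.sq_norm]; exact ncol0
      have habs_z : ‖(c0:ℂ) + s0*I‖ = 1 := by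
        have h' : Complex.normSq ((c0:ℂ) + s0*I) = 1 := by
          rw [Complex.normSq_add_mul_I]; exact hcs1
        rw [Complex.norm_def, h', Real.sqrt_one]
      have habs_w : ‖(c0:ℂ) - s0*I‖ = 1 := by
        have : ((c0:ℂ) - s0*I) = ((c0:ℂ) + (-s0:ℝ)*I) := by push_cast; ring
        rw [this]
        have : Complex.normSq ((c0:ℂ) + (-s0:ℝ)*I) = 1 := by
          rw [Complex.normSq_add_mul_I]; nlinarith
        rw [Complex.norm_def, this, Real.sqrt_one]
      set p : ℂ := a / c0 with hp
      set q : ℂ := c / ((s0:ℂ) * I) with hq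
      set t : ℂ := b * c0 / (a * ((s0:ℂ) * I)) with ht
      have habs_p : ‖p‖ = 1 := by
        rw [hp, norm_div, Complex.norm_real, Real.norm_eq_abs, abs_of_pos hc0pos, ← hc0def,
          div_self hc0pos.ne']
      have habs_q : ‖q‖ = 1 := by
        have h' : ‖(s0:ℂ)*I‖ = s0 := by
          rw [norm_mul, Complex.norm_real, Real.norm_eq_abs, abs_of_pos hs0pos, Complex.norm_I, mul_one]
        rw [hq, norm_div, h', ← hs0def, div_self hs0pos.ne']
      have habs_t : ‖t‖ = 1 := by
        have h1 : ‖b*(c0:ℂ)‖ = s0*c0 := by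
          rw [norm_mul, Complex.norm_real, Real.norm_eq_abs, abs_of_pos hc0pos, hbc]
        have h2' : ‖a*((s0:ℂ)*I)‖ = c0*s0 := by
          rw [norm_mul, norm_mul, Complex.norm_real, Real.norm_eq_abs, abs_of_pos hs0pos,
            Complex.norm_I, mul_one, ← hc0def]
        rw [ht, norm_div, h1, h2', mul_comm]
        exact div_self (by positivity)
      set D1 : Matrix.unitaryGroup (Fin 2) ℂ :=
        ⟨!![p,0;0,q], diag_unitary p q habs_p habs_q⟩ with hD1
      set Dm : Matrix.unitaryGroup (Fin 2) ℂ :=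
        ⟨!![(c0:ℂ)+s0*I,0;0,(c0:ℂ)-s0*I], diag_unitary _ _ habs_z habs_w⟩ with hDm
      set D2 : Matrix.unitaryGroup (Fin 2) ℂ :=
        ⟨!![1,0;0,t], diag_unitary 1 t (by simp) habs_t⟩ with hD2
      have hD1mem : D1 ∈ Subgroup.closure S := by
        refine Subgroup.subset_closure (Or.inr ?_)
        intro i j hij; fin_cases i <;> fin_cases j <;> simp_all [hD1]
      have hDmmem : Dm ∈ Subgroup.closure S := by
        refine Subgroup.subset_closure (Or.inr ?_)
        intro i j hij; fin_cases i <;> fin_cases j <;> simp_all [hDm]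
      have hD2mem : D2 ∈ Subgroup.closure S := by
        refine Subgroup.subset_closure (Or.inr ?_)
        intro i j hij; fin_cases i <;> fin_cases j <;> simp_all [hD2]
      -- entry facts as complex numbers
      have hca : (starRingEnd ℂ) a * a = (c0:ℂ)^2 := by
        rw [mul_comm, Complex.mul_conj]; norm_cast; rw [hc0def, Complex.sq_norm]
      have hcc : (starRingEnd ℂ) c * c = (s0:ℂ)^2 := by
        rw [mul_comm, Complex.mul_conj]; norm_cast; rw [hs0def, Complex.sq_norm]
      have keyd : d * a * ((s0:ℂ))^2 = -(b*c*((c0:ℂ))^2) := by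
        linear_combination (-(d*a))*hcc - (b*c)*hca + a*c*orth
      have key : U = D1 * (Hd * Dm * Hd) * D2 := by
        apply Subtype.ext
        have hK : ((Hd * Dm * Hd : Matrix.unitaryGroup (Fin 2) ℂ) :
            Matrix (Fin 2) (Fin 2) ℂ) = !![(c0:ℂ), s0*I; s0*I, (c0:ℂ)] := by
          push_cast [hHd, hDm]
          ext i j
          fin_cases i <;> fin_cases j <;>
            simp [Matrix.mul_apply, Fin.sum_univ_two] <;> field_simp <;> ring_nf <;>
            simp [h2, hsq]
        have hcoe : ((D1 * (Hd * Dm * Hd) * D2 : Matrix.unitaryGroup (Fin 2) ℂ) :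
            Matrix (Fin 2) (Fin 2) ℂ)
            = !![p*c0, p*((s0:ℂ)*I)*t; q*((s0:ℂ)*I), q*c0*t] := by
          push_cast [hD1, hK, hD2]
          ext i j
          fin_cases i <;> fin_cases j <;>
            simp [Matrix.mul_apply, Fin.sum_univ_two] <;> ring
        rw [hcoe]
        have e00 : p * c0 = a := by rw [hp]; field_simp
        have e01 : p * ((s0:ℂ)*I) * t = b := by rw [hp, ht]; field_simp
        have e10 : q * ((s0:ℂ)*I) = c := by rw [hq]; field_simp
        have e11 : q * c0 * t = d := by
          rw [hq, ht]
          field_simp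
          linear_combination keyd - d*a*((s0:ℂ))^2*Complex.I_sq
        ext i j
        fin_cases i <;> fin_cases j <;>
          simp [e00, e01, e10, e11, ← ha, ← hb, ← hc, ← hd]
      rw [key]
      exact mul_mem (mul_mem hD1mem (mul_mem (mul_mem hHmem hDmmem) hHmem)) hD2mem
end

section
/- Measurement commutes with injections: let ι and κ be finite types with decidable equality and let J : Matrix (ι ⊕ κ) ι ℂ be the injection matrix, J a b = 1 if a = Sum.inl b and 0 otherwise. Then for every ρ : Matrix ι ι ℂ, M_{ι ⊕ κ}(J * ρ * Jᴴ) = J * M_ι(ρ) * Jᴴ. -/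
open Matrix

/-- The computational-basis measurement channel `M_ι(ρ) = ∑ i, E_i * ρ * E_i`,
where `E_i` is the matrix with a single `1` in entry `(i, i)`. -/
noncomputable def measureChannel (ι : Type*) [Fintype ι] [DecidableEq ι]
    (ρ : Matrix ι ι ℂ) : Matrix ι ι ℂ :=
  ∑ i, Matrix.single i i (1 : ℂ) * ρ * Matrix.single i i (1 : ℂ)

/-- The injection matrix `J a b = 1` if `a = Sum.inl b`, else `0`; conjugation by it
interprets the injection combinator `inl`. -/
noncomputable def injMatrix (ι κ : Type*) [DecidableEq ι] [DecidableEq κ] :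
    Matrix (ι ⊕ κ) ι ℂ :=
  Matrix.of fun a b => if a = Sum.inl b then 1 else 0

lemma measureChannel_apply {ι : Type*} [Fintype ι] [DecidableEq ι]
    (ρ : Matrix ι ι ℂ) (a b : ι) :
    measureChannel ι ρ a b = if a = b then ρ a a else 0 := by
  simp [measureChannel, Matrix.sum_apply, Matrix.mul_apply, Matrix.single,
    Finset.sum_ite_eq, ite_and, eq_comm]
  split <;> simp_all

/-- Measurement commutes with injections:
`M_{ι ⊕ κ}(J * ρ * Jᴴ) = J * M_ι(ρ) * Jᴴ`. -/
theorem measure_comm_injection {ι κ : Type*} [Fintype ι] [DecidableEq ι]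
    [Fintype κ] [DecidableEq κ] (ρ : Matrix ι ι ℂ) :
    measureChannel (ι ⊕ κ) (injMatrix ι κ * ρ * (injMatrix ι κ)ᴴ)
      = injMatrix ι κ * measureChannel ι ρ * (injMatrix ι κ)ᴴ := by
  ext a b
  rw [measureChannel_apply]
  simp only [Matrix.mul_apply, Matrix.conjTranspose_apply, injMatrix, Matrix.of_apply,
    measureChannel_apply]
  cases a <;> cases b <;>
    (simp [Finset.sum_ite_eq, apply_ite, eq_comm]; try split <;> simp_all)
end

section
/- Measurement commutes with projections: let ι and κ be finite types with decidable equality. For every ρ : Matrix (ι × κ) (ι × κ) ℂ, the partial trace over the second factor of the measured state equals the measurement of the partial trace: ptr₂(M_{ι × κ}(ρ)) = M_ι(ptr₂(ρ)). -/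
open Matrix

/-- The partial trace over the second tensor factor:
`ptr₂(σ) i k = ∑ j, σ (i, j) (k, j)`; it interprets the projection combinator `fst`. -/
noncomputable def ptr2 {ι κ : Type*} [Fintype κ]
    (σ : Matrix (ι × κ) (ι × κ) ℂ) : Matrix ι ι ℂ :=
  Matrix.of fun i k => ∑ j, σ (i, j) (k, j)

/-- Measurement commutes with projections:
`ptr₂(M_{ι × κ}(ρ)) = M_ι(ptr₂(ρ))`. -/
theorem measure_comm_ptr2 {ι κ : Type*} [Fintype ι] [DecidableEq ι]
    [Fintype κ] [DecidableEq κ] (ρ : Matrix (ι × κ) (ι × κ) ℂ) :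
    ptr2 (measureChannel (ι × κ) ρ) = measureChannel ι (ptr2 ρ) := by
  ext i k
  simp only [ptr2, Matrix.of_apply, measureChannel_apply, Prod.mk.injEq, and_true, ite_and]
  by_cases h : i = k <;> simp [h]
end
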